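/- Let T be the Minkowski-centered equilateral triangle with vertices p¹ = (0,1), p² = (−√3/2,−1/2), p³ = (√3/2,−1/2), and for α ∈ [1/3, 2/3] let T_α = conv({αp¹+(1−α)p², αp²+(1−α)p³, αp³+(1−α)p¹}). Then D_MAX(T_α, T) = R(T_α, T) and r(T_α, T) = (1 − 3α + 3α²)·R(T_α, T). -/

import Mathlib

open Pointwise Set

variable {V : Type*} [NormedAddCommGroup V] [NormedSpace ℝ V]

/-- Circumradius `R(K,C) = inf {ρ ≥ 0 : ∃ t, K ⊆ t + ρC}`. -/
noncomputable def circumradius (K C : Set V) : ℝ :=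
  sInf {ρ : ℝ | 0 ≤ ρ ∧ ∃ t : V, K ⊆ t +ᵥ ρ • C}

/-- Inradius `r(K,C) = sup {ρ ≥ 0 : ∃ t, t + ρC ⊆ K}`. -/
noncomputable def inradius (K C : Set V) : ℝ :=
  sSup {ρ : ℝ | 0 ≤ ρ ∧ ∃ t : V, t +ᵥ ρ • C ⊆ K}

/-- Optimal containment: `K ⊆ C` and `R(K,C) = 1`. -/
def OptCont (K C : Set V) : Prop := K ⊆ C ∧ circumradius K C = 1

/-- Minkowski asymmetry `s(C) = R(C, -C)`. -/
noncomputable def minkAsym (C : Set V) : ℝ := circumradius C (-C)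

/-- `C` is Minkowski-centered if `C ⊆opt s(C) • (-C)`. -/
def MinkowskiCentered (C : Set V) : Prop := OptCont C (minkAsym C • (-C))

/-- Arithmetic symmetrization `(K - K)/2`. -/
def symAM (K : Set V) : Set V := (2 : ℝ)⁻¹ • (K - K)

/-- Maximum symmetrization `conv (C ∪ -C)`. -/
def symMAX (C : Set V) : Set V := convexHull ℝ (C ∪ -C)

/-- Minimum symmetrization `C ∩ -C`. -/
def symMIN (C : Set V) : Set V := C ∩ -C

/-- The maximum diameter `D_MAX(K,C) = 2 R((K-K)/2, conv(C ∪ -C))`. -/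
noncomputable def DMAX (K C : Set V) : ℝ := 2 * circumradius (symAM K) (symMAX C)

/-- The minimum diameter `D_MIN(K,C) = 2 R((K-K)/2, C ∩ -C)`. -/
noncomputable def DMIN (K C : Set V) : ℝ := 2 * circumradius (symAM K) (symMIN C)

/-- A body is complete (w.r.t. a diameter functional `D`) if every strictly larger
convex body has strictly larger diameter. -/
def IsCompleteBody (D : Set V → ℝ) (K : Set V) : Prop :=
  ∀ K' : Set V, Convex ℝ K' → IsCompact K' → K ⊂ K' → D K < D K'

/-- `Kstar` is a completion of `K` w.r.t. the diameter functional `D`. -/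
def IsCompletion (D : Set V → ℝ) (K Kstar : Set V) : Prop :=
  K ⊆ Kstar ∧ Convex ℝ Kstar ∧ IsCompact Kstar ∧ IsCompleteBody D Kstar ∧ D Kstar = D K

/-!
Everything is affine invariant, so we work with any triangle `p` with centroid `0`; `T_α` has
vertices `q i = α p i + (1 - α) p (i + 1)`. Then `T_α` lies in `T` and touches all three edges
of `T`; `(1 - 3α + 3α²) • T` lies in `T_α` and each of its vertices lies on an edge of `T_α`; and
for `1/3 ≤ α ≤ 2/3` the difference body of `T_α` lies in the hexagon `conv (T ∪ -T)`, with
`q 0 - q 1` on one of its edges. Each of these containments is optimal: evaluating the supporting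
functionals of the touched edges at the touching points and summing, the translation drops out
because the functionals sum to zero. This gives `R(T_α, T) = 1`, `r(T_α, T) = 1 - 3α + 3α²` and
`D_MAX(T_α, T) = 2 R((T_α - T_α)/2, conv (T ∪ -T)) = 1`.
-/

theorem LinearMap.mapsTo_convexHull {E : Type*} [AddCommGroup E] [Module ℝ E] (f : E →ₗ[ℝ] ℝ)
    {s : Set E} {S : Set ℝ} (hS : Convex ℝ S) (h : MapsTo f s S) :
    MapsTo f (convexHull ℝ s) S :=
  convexHull_min h (hS.linear_preimage f)

theorem sum_comp_add_right {G M : Type*} [AddGroup G] [Fintype G] [AddCommMonoid M] (f : G → M)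
    (k : G) : ∑ i, f (i + k) = ∑ i, f i :=
  Equiv.sum_comp (Equiv.addRight k) f

section FunctionalsSummingToZero

variable {E : Type*} [AddCommGroup E] [Module ℝ E] {ι : Type*} [Fintype ι]
  {f : ι → E →ₗ[ℝ] ℝ}

theorem sum_apply_add_smul (hf : ∑ i, f i = 0) (t : E) (ρ : ℝ) (y : ι → E) :
    ∑ i, f i (t + ρ • y i) = ρ * ∑ i, f i (y i) := by
  have ht : ∑ i, f i t = 0 := by rw [← LinearMap.sum_apply, hf, LinearMap.zero_apply]
  simp only [map_add, map_smul, smul_eq_mul, Finset.sum_add_distrib, ht, ← Finset.mul_sum,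
    zero_add]

theorem sum_le_of_subset_vadd_smul (hf : ∑ i, f i = 0) {K C : Set E} {b : ι → ℝ}
    (hC : ∀ i, ∀ y ∈ C, f i y ≤ b i) {x : ι → E} (hx : ∀ i, x i ∈ K) {ρ : ℝ} (hρ : 0 ≤ ρ)
    {t : E} (hKC : K ⊆ t +ᵥ ρ • C) : ∑ i, f i (x i) ≤ ρ * ∑ i, b i := by
  have hy : ∀ i, ∃ y ∈ C, t + ρ • y = x i := fun i => by
    obtain ⟨_, ⟨y, hy, rfl⟩, hxy⟩ := hKC (hx i)
    exact ⟨y, hy, hxy⟩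
  choose y hyC hyx using hy
  simp only [← hyx, sum_apply_add_smul hf]
  exact mul_le_mul_of_nonneg_left (Finset.sum_le_sum fun i _ => hC i _ (hyC i)) hρ

theorem sum_le_of_vadd_smul_subset (hf : ∑ i, f i = 0) {K C : Set E} {b : ι → ℝ}
    (hK : ∀ i, ∀ x ∈ K, f i x ≤ b i) {y : ι → E} (hy : ∀ i, y i ∈ C) {ρ : ℝ} {t : E}
    (hCK : t +ᵥ ρ • C ⊆ K) : ρ * ∑ i, f i (y i) ≤ ∑ i, b i := by
  rw [← sum_apply_add_smul hf t]
  exact Finset.sum_le_sum fun i _ => hK i _ (hCK (vadd_mem_vadd_set (smul_mem_smul_set (hy i))))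

end FunctionalsSummingToZero

section SymMAX

variable {C : Set V} {x : V}

theorem symMAX_eq_absConvexHull : symMAX C = absConvexHull ℝ C :=
  convexHull_union_neg_eq_absConvexHull

theorem subset_symMAX : C ⊆ symMAX C :=
  symMAX_eq_absConvexHull (C := C) ▸ subset_absConvexHull

theorem neg_mem_symMAX (hx : x ∈ symMAX C) : -x ∈ symMAX C := by
  rw [symMAX_eq_absConvexHull] at hx ⊢
  exact balanced_absConvexHull.neg_mem_iff.2 hx

theorem zero_mem_symMAX (hx : x ∈ symMAX C) : (0 : V) ∈ symMAX C := by
  rw [symMAX_eq_absConvexHull] at hx ⊢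
  exact balanced_absConvexHull.zero_mem ⟨x, hx⟩

theorem LinearMap.mapsTo_symMAX (g : V →ₗ[ℝ] ℝ) {r : ℝ} (h : MapsTo g C (Icc (-r) r)) :
    MapsTo g (symMAX C) (Icc (-r) r) := by
  refine g.mapsTo_convexHull (convex_Icc _ _) ?_
  rintro x (hx | hx)
  · exact h hx
  · have := h (Set.mem_neg.1 hx)
    simp only [map_neg, mem_Icc] at this ⊢
    constructor <;> linarith [this.1, this.2]

end SymMAX

theorem range_fin_three {X : Type*} (f : Fin 3 → X) : range f = {f 0, f 1, f 2} := by
  ext x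
  simp [Fin.exists_fin_succ, eq_comm]

theorem add_add_eq_zero_of_sum_eq_zero {M : Type*} [AddCommGroup M] {p : Fin 3 → M}
    (hp : ∑ i, p i = 0) (i : Fin 3) : p i + p (i + 1) + p (i + 2) = 0 := by
  rw [Fin.sum_univ_three] at hp
  fin_cases i <;> simp <;> rw [← hp] <;> abel

section Triangle

variable {E : Type*} [AddCommGroup E] [Module ℝ E] {p : Fin 3 → E} {α : ℝ}

def triangle (p : Fin 3 → E) : Set E := convexHull ℝ (range p)

def inscribedVertex (α : ℝ) (p : Fin 3 → E) (i : Fin 3) : E := α • p i + (1 - α) • p (i + 1)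

def inscribedTriangle (α : ℝ) (p : Fin 3 → E) : Set E :=
  convexHull ℝ (range (inscribedVertex α p))

theorem vertex_mem_triangle (i : Fin 3) : p i ∈ triangle p := subset_convexHull ℝ _ ⟨i, rfl⟩

theorem inscribedVertex_mem_inscribedTriangle (i : Fin 3) :
    inscribedVertex α p i ∈ inscribedTriangle α p :=
  subset_convexHull ℝ _ ⟨i, rfl⟩

theorem inscribedTriangle_subset_triangle (hα : α ∈ Icc (0 : ℝ) 1) :
    inscribedTriangle α p ⊆ triangle p := by
  refine convexHull_min ?_ (convex_convexHull ℝ _)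
  rintro _ ⟨i, rfl⟩
  exact convex_convexHull ℝ _ (vertex_mem_triangle i) (vertex_mem_triangle (i + 1)) hα.1
    (sub_nonneg.2 hα.2) (add_sub_cancel _ _)

theorem smul_vertex_eq_inscribedVertex_combo (hp : ∑ i, p i = 0) (i : Fin 3) :
    (1 - 3 * α + 3 * α ^ 2) • p i =
      α • inscribedVertex α p i + (1 - α) • inscribedVertex α p (i + 2) := by
  have hi : i + 2 + 1 = i := by fin_cases i <;> rfl
  simp only [inscribedVertex, hi]
  linear_combination (norm := module) (-(α * (1 - α))) • add_add_eq_zero_of_sum_eq_zero hp i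

theorem smul_triangle_subset_inscribedTriangle (hp : ∑ i, p i = 0) (hα : α ∈ Icc (0 : ℝ) 1) :
    (1 - 3 * α + 3 * α ^ 2) • triangle p ⊆ inscribedTriangle α p := by
  rw [triangle, ← convexHull_smul]
  refine convexHull_min ?_ (convex_convexHull ℝ _)
  rintro _ ⟨_, ⟨i, rfl⟩, rfl⟩
  change (1 - 3 * α + 3 * α ^ 2) • p i ∈ _
  rw [smul_vertex_eq_inscribedVertex_combo hp]
  exact convex_convexHull ℝ _ (inscribedVertex_mem_inscribedTriangle i)
    (inscribedVertex_mem_inscribedTriangle (i + 2)) hα.1 (sub_nonneg.2 hα.2) (add_sub_cancel _ _)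

theorem inscribedVertex_sub_inscribedVertex_add_one (hp : ∑ i, p i = 0) (i : Fin 3) :
    inscribedVertex α p i - inscribedVertex α p (i + 1) =
      (3 * α - 1) • p i + (2 - 3 * α) • -p (i + 2) := by
  have hi : i + 1 + 1 = i + 2 := by fin_cases i <;> rfl
  simp only [inscribedVertex, hi]
  linear_combination (norm := module) (1 - 2 * α) • add_add_eq_zero_of_sum_eq_zero hp i

end Triangle

theorem inscribedTriangle_sub_subset_symMAX {p : Fin 3 → V} {α : ℝ} (hp : ∑ i, p i = 0)
    (hα : α ∈ Icc (1 / 3 : ℝ) (2 / 3)) :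
    inscribedTriangle α p - inscribedTriangle α p ⊆ symMAX (triangle p) := by
  have hsucc : ∀ i, inscribedVertex α p i - inscribedVertex α p (i + 1) ∈ symMAX (triangle p) := by
    intro i
    rw [inscribedVertex_sub_inscribedVertex_add_one hp]
    exact convex_convexHull ℝ _ (subset_symMAX (vertex_mem_triangle i))
      (neg_mem_symMAX (subset_symMAX (vertex_mem_triangle _))) (by linarith [hα.1])
      (by linarith [hα.2]) (by ring)
  rw [inscribedTriangle, ← convexHull_sub]
  refine convexHull_min ?_ (convex_convexHull ℝ _)
  rintro _ ⟨_, ⟨i, rfl⟩, _, ⟨j, rfl⟩, rfl⟩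
  dsimp only
  obtain rfl | rfl | rfl : j = i ∨ j = i + 1 ∨ i = j + 1 := by revert i j; decide
  · rw [sub_self]; exact zero_mem_symMAX (hsucc j)
  · exact hsucc i
  · rw [← neg_sub]; exact neg_mem_symMAX (hsucc j)

/-! In this section `e i = 3 λᵢ - 1`, where `λᵢ` is the `i`-th barycentric coordinate with
respect to `p`; such functionals exist for every nondegenerate triangle with centroid `0`. -/
section CenteredDual

variable {p : Fin 3 → V} {α : ℝ} {e : Fin 3 → V →ₗ[ℝ] ℝ}

theorem circumradius_inscribedTriangle (hα : α ∈ Icc (0 : ℝ) 1) (he : ∑ i, e i = 0)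
    (hep : ∀ i j, e i (p j) = if i = j then 2 else -1) :
    circumradius (inscribedTriangle α p) (triangle p) = 1 := by
  refine IsLeast.csInf_eq
    ⟨⟨zero_le_one, 0, by simpa using inscribedTriangle_subset_triangle hα⟩, ?_⟩
  rintro ρ ⟨hρ, t, hsub⟩
  -- `-e (i + 2)` is `≤ 1` on `T`, with equality on the edge `[p i, p (i + 1)]` containing `q i`
  have hsum : ∑ i, -e (i + 2) = 0 := by
    rw [Finset.sum_neg_distrib, sum_comp_add_right e, he, neg_zero]
  have hle : ∀ i, ∀ y ∈ triangle p, -e (i + 2) y ≤ 1 := fun i =>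
    (-e (i + 2)).mapsTo_convexHull (convex_Iic 1) (by
      rintro _ ⟨j, rfl⟩
      simp only [LinearMap.neg_apply, hep, mem_Iic]
      split_ifs <;> norm_num)
  have hval : ∀ i, (-e (i + 2)) (inscribedVertex α p i) = 1 := by
    intro i; fin_cases i <;> simp [inscribedVertex, hep]
  have := sum_le_of_subset_vadd_smul hsum hle (fun i => inscribedVertex_mem_inscribedTriangle i)
    hρ hsub
  simp only [hval, Finset.sum_const, Finset.card_univ, Fintype.card_fin, nsmul_eq_mul] at this
  norm_num at this
  linarith

theorem inradius_inscribedTriangle (hp : ∑ i, p i = 0) (hα : α ∈ Icc (0 : ℝ) 1)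
    (he : ∑ i, e i = 0) (hep : ∀ i j, e i (p j) = if i = j then 2 else -1) :
    inradius (inscribedTriangle α p) (triangle p) = 1 - 3 * α + 3 * α ^ 2 := by
  have hL : 0 ≤ 1 - 3 * α + 3 * α ^ 2 := by nlinarith [sq_nonneg (2 * α - 1)]
  refine IsGreatest.csSup_eq
    ⟨⟨hL, 0, by simpa using smul_triangle_subset_inscribedTriangle hp hα⟩, ?_⟩
  rintro ρ ⟨-, t, hsub⟩
  -- `h i` takes the value `1 - 3α + 3α²` on the edge `[q i, q (i + 1)]` of `T_α`, `-2` times it at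
  -- `q (i + 2)`, and `1` at `p (i + 1)`
  set h : Fin 3 → V →ₗ[ℝ] ℝ := fun i => (2 * α - 1) • e i + α • e (i + 1)
  have hsum : ∑ i, h i = 0 := by
    simp only [h, Finset.sum_add_distrib, ← Finset.smul_sum, sum_comp_add_right e, he, smul_zero,
      add_zero]
  have hle : ∀ i, ∀ x ∈ inscribedTriangle α p, h i x ≤ 1 - 3 * α + 3 * α ^ 2 := fun i =>
    (h i).mapsTo_convexHull (convex_Iic _) (by
      rintro _ ⟨j, rfl⟩
      fin_cases i <;> fin_cases j <;> simp [h, inscribedVertex, hep] <;> nlinarith)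
  have hval : ∀ i, h i (p (i + 1)) = 1 := by
    intro i; fin_cases i <;> simp [h, hep] <;> ring
  have := sum_le_of_vadd_smul_subset hsum hle (fun i => vertex_mem_triangle (i + 1)) hsub
  simp only [hval, Finset.sum_const, Finset.card_univ, Fintype.card_fin, nsmul_eq_mul] at this
  norm_num at this
  linarith

theorem circumradius_symAM_inscribedTriangle (hp : ∑ i, p i = 0)
    (hα : α ∈ Icc (1 / 3 : ℝ) (2 / 3)) (hep : ∀ i j, e i (p j) = if i = j then 2 else -1) :
    circumradius (symAM (inscribedTriangle α p)) (symMAX (triangle p)) = 2⁻¹ := by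
  refine IsLeast.csInf_eq ⟨⟨by norm_num, 0, ?_⟩, ?_⟩
  · rw [zero_vadd]; exact smul_set_mono (inscribedTriangle_sub_subset_symMAX hp hα)
  rintro ρ ⟨hρ, t, hsub⟩
  -- `g` is `3` on the hexagon edge `[p 0, -p 2]` containing `q 0 - q 1`, `-3` on the opposite one
  set g := e 0 - e 2
  have hg : MapsTo g (symMAX (triangle p)) (Icc (-3) 3) :=
    g.mapsTo_symMAX (g.mapsTo_convexHull (convex_Icc _ _) (by
      rintro _ ⟨j, rfl⟩
      fin_cases j <;> simp [g, hep] <;> norm_num))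
  have hsum : ∑ i, ![g, -g] i = 0 := by simp
  have hle : ∀ i, ∀ y ∈ symMAX (triangle p), ![g, -g] i y ≤ 3 := by
    intro i y hy
    have := hg hy
    fin_cases i <;> simp <;> linarith [this.1, this.2]
  set x := (2 : ℝ)⁻¹ • (inscribedVertex α p 0 - inscribedVertex α p 1)
  have hx : ∀ i, ![x, -x] i ∈ symAM (inscribedTriangle α p) := by
    intro i
    fin_cases i
    · exact smul_mem_smul_set (sub_mem_sub (inscribedVertex_mem_inscribedTriangle 0)
        (inscribedVertex_mem_inscribedTriangle 1))
    · simp only [x, ← smul_neg, neg_sub]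
      exact smul_mem_smul_set (sub_mem_sub (inscribedVertex_mem_inscribedTriangle 1)
        (inscribedVertex_mem_inscribedTriangle 0))
  have hgx : g x = 3 / 2 := by
    have hq := inscribedVertex_sub_inscribedVertex_add_one (α := α) hp 0
    rw [zero_add, zero_add] at hq
    simp [x, g, hq, hep]
    ring
  have := sum_le_of_subset_vadd_smul hsum hle hx hρ hsub
  simp [Fin.sum_univ_two, hgx] at this
  linarith

theorem DMAX_inscribedTriangle (hp : ∑ i, p i = 0) (hα : α ∈ Icc (1 / 3 : ℝ) (2 / 3))
    (hep : ∀ i j, e i (p j) = if i = j then 2 else -1) :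
    DMAX (inscribedTriangle α p) (triangle p) = 1 := by
  rw [DMAX, circumradius_symAM_inscribedTriangle hp hα hep]
  norm_num

end CenteredDual

noncomputable def equilateralVertex : Fin 3 → Fin 2 → ℝ :=
  ![![0, 1], ![-(Real.sqrt 3 / 2), -(1 / 2)], ![Real.sqrt 3 / 2, -(1 / 2)]]

theorem sum_equilateralVertex : ∑ i, equilateralVertex i = 0 := by
  ext k
  fin_cases k <;> simp [equilateralVertex, Fin.sum_univ_three]
  norm_num

theorem equilateralVertex_dotProduct (i j : Fin 3) :
    equilateralVertex i ⬝ᵥ equilateralVertex j = if i = j then 1 else -2⁻¹ := by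
  have hs : Real.sqrt 3 ^ 2 = 3 := Real.sq_sqrt (by norm_num)
  fin_cases i <;> fin_cases j <;> simp [equilateralVertex, dotProduct] <;> nlinarith

/-- For the Minkowski-centered equilateral triangle `T` and the rotated inscribed triangles
`T_α` (α ∈ [1/3, 2/3]): `D_MAX(T_α, T) = R(T_α, T)` and
`r(T_α, T) = (1 - 3α + 3α²) R(T_α, T)`. -/
theorem Talpha_jung_extremal (α : ℝ) (hα : α ∈ Set.Icc (1/3 : ℝ) (2/3 : ℝ)) :
    let p1 : Fin 2 → ℝ := ![0, 1]
    let p2 : Fin 2 → ℝ := ![-(Real.sqrt 3 / 2), -(1/2)]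
    let p3 : Fin 2 → ℝ := ![Real.sqrt 3 / 2, -(1/2)]
    let T : Set (Fin 2 → ℝ) := convexHull ℝ {p1, p2, p3}
    let Tα : Set (Fin 2 → ℝ) :=
      convexHull ℝ {α • p1 + (1 - α) • p2, α • p2 + (1 - α) • p3, α • p3 + (1 - α) • p1}
    DMAX Tα T = circumradius Tα T ∧
      inradius Tα T = (1 - 3 * α + 3 * α ^ 2) * circumradius Tα T := by
  intro p1 p2 p3 T Tα
  set e : Fin 3 → (Fin 2 → ℝ) →ₗ[ℝ] ℝ :=
    fun i => (2 : ℝ) • dotProductEquiv ℝ (Fin 2) (equilateralVertex i)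
  have hT : T = triangle equilateralVertex := by rw [triangle, range_fin_three]; rfl
  have hTα : Tα = inscribedTriangle α equilateralVertex := by
    rw [inscribedTriangle, range_fin_three]; rfl
  have he : ∑ i, e i = 0 := by
    simp only [e, ← Finset.smul_sum, ← map_sum, sum_equilateralVertex, map_zero, smul_zero]
  have hep : ∀ i j, e i (equilateralVertex j) = if i = j then 2 else -1 := by
    intro i j
    simp only [e, LinearMap.smul_apply, dotProductEquiv_apply_apply, equilateralVertex_dotProduct]
    split_ifs <;> norm_num
  have hα₀₁ : α ∈ Icc (0 : ℝ) 1 := ⟨by linarith [hα.1], by linarith [hα.2]⟩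
  rw [hT, hTα, DMAX_inscribedTriangle sum_equilateralVertex hα hep,
    circumradius_inscribedTriangle hα₀₁ he hep,
    inradius_inscribedTriangle sum_equilateralVertex hα₀₁ he hep, mul_one]
  exact ⟨rfl, rfl⟩
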